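/- (Proposition 4.) Assume π̲ = 0, t_s > t_e, and 0 < 2 t_r < t_k. Define ψ₃(p) = F(p)·(1 − (t_r/t_k)(1 − F(p))). Let p* ∈ [0, π̄] satisfy ψ₃(p*) = t_e/t_s. Then (p*, 0) is P3-feasible and Φ₃(p*, 0) ≤ Φ₃(p, q) for every P3-feasible pair (p, q). That is, when the deadline exceeds the execution time, the optimal persistent-request strategy runs no portion of the job on the on-demand instance (q* = 0) and bids p* = ψ₃^{-1}(t_e/t_s). -/

import Mathlib

lemma mean_le_half (f : ℝ → ℝ) (p : ℝ) (hp : 0 ≤ p)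
    (hc : ContinuousOn f (Set.Icc 0 p))
    (hmono : ∀ x ∈ Set.Icc 0 p, ∀ y ∈ Set.Icc 0 p, x ≤ y → f y ≤ f x) :
    2 * ∫ x in (0:ℝ)..p, x * f x ≤ p * ∫ x in (0:ℝ)..p, f x := by
  set c := f (p/2) with hc'
  have hpm : p/2 ∈ Set.Icc (0:ℝ) p := ⟨by linarith, by linarith⟩
  have hsub1 : Set.uIcc (0:ℝ) (p/2) ⊆ Set.Icc 0 p := by
    rw [Set.uIcc_of_le (by linarith)]; exact Set.Icc_subset_Icc le_rfl (by linarith)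
  have hsub2 : Set.uIcc (p/2) p ⊆ Set.Icc 0 p := by
    rw [Set.uIcc_of_le (by linarith)]; exact Set.Icc_subset_Icc (by linarith) le_rfl
  have hif1 : IntervalIntegrable f MeasureTheory.volume 0 (p/2) :=
    (hc.mono hsub1).intervalIntegrable
  have hif2 : IntervalIntegrable f MeasureTheory.volume (p/2) p :=
    (hc.mono hsub2).intervalIntegrable
  have hcid : ContinuousOn (fun x : ℝ => x * f x) (Set.Icc 0 p) :=
    continuousOn_id.mul hc
  have hig1 : IntervalIntegrable (fun x : ℝ => x * f x) MeasureTheory.volume 0 (p/2) :=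
    (hcid.mono hsub1).intervalIntegrable
  have hig2 : IntervalIntegrable (fun x : ℝ => x * f x) MeasureTheory.volume (p/2) p :=
    (hcid.mono hsub2).intervalIntegrable
  have hk1 : IntervalIntegrable (fun x : ℝ => (p/2 - x) * c) MeasureTheory.volume 0 (p/2) :=
    (Continuous.intervalIntegrable (by continuity) _ _)
  have hk2 : IntervalIntegrable (fun x : ℝ => (x - p/2) * c) MeasureTheory.volume (p/2) p :=
    (Continuous.intervalIntegrable (by continuity) _ _)
  -- bound on first piece
  have h1 : ∫ x in (0:ℝ)..(p/2), x * f x ≤ ∫ x in (0:ℝ)..(p/2), ((p/2) * f x - (p/2 - x) * c) := by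
    apply intervalIntegral.integral_mono_on (by linarith) hig1
      ((hif1.const_mul (p/2)).sub hk1)
    intro x hx
    have hx' : x ∈ Set.Icc 0 p := ⟨hx.1, by linarith [hx.2]⟩
    have := hmono x hx' (p/2) hpm hx.2
    nlinarith [hx.1, hx.2]
  have h2 : ∫ x in (p/2)..p, x * f x ≤ ∫ x in (p/2)..p, ((p/2) * f x + (x - p/2) * c) := by
    apply intervalIntegral.integral_mono_on (by linarith) hig2
      ((hif2.const_mul (p/2)).add hk2)
    intro x hx
    have hx' : x ∈ Set.Icc 0 p := ⟨by linarith [hx.1], hx.2⟩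
    have := hmono (p/2) hpm x hx' hx.1
    nlinarith [hx.1, hx.2]
  -- compute RHS integrals
  have e1 : ∫ x in (0:ℝ)..(p/2), ((p/2) * f x - (p/2 - x) * c)
      = (p/2) * (∫ x in (0:ℝ)..(p/2), f x) - c * (p/2)^2/2 := by
    rw [intervalIntegral.integral_sub (hif1.const_mul _) hk1,
      intervalIntegral.integral_const_mul]
    have : ∫ x in (0:ℝ)..(p/2), (p/2 - x) * c = c * (p/2)^2/2 := by
      rw [intervalIntegral.integral_mul_const,
        intervalIntegral.integral_sub intervalIntegrable_const
          intervalIntegral.intervalIntegrable_id]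
      simp [integral_id]
      ring
    rw [this]
  have e2 : ∫ x in (p/2)..p, ((p/2) * f x + (x - p/2) * c)
      = (p/2) * (∫ x in (p/2)..p, f x) + c * (p/2)^2/2 := by
    rw [intervalIntegral.integral_add (hif2.const_mul _) hk2,
      intervalIntegral.integral_const_mul]
    have : ∫ x in (p/2)..p, (x - p/2) * c = c * (p/2)^2/2 := by
      rw [intervalIntegral.integral_mul_const,
        intervalIntegral.integral_sub intervalIntegral.intervalIntegrable_id
          intervalIntegrable_const]
      simp [integral_id]
      ring
    rw [this]
  have hsplitG : ∫ x in (0:ℝ)..p, x * f x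
      = (∫ x in (0:ℝ)..(p/2), x * f x) + ∫ x in (p/2)..p, x * f x :=
    (intervalIntegral.integral_add_adjacent_intervals hig1 hig2).symm
  have hsplitF : ∫ x in (0:ℝ)..p, f x
      = (∫ x in (0:ℝ)..(p/2), f x) + ∫ x in (p/2)..p, f x :=
    (intervalIntegral.integral_add_adjacent_intervals hif1 hif2).symm
  rw [hsplitG, hsplitF]
  rw [e1] at h1; rw [e2] at h2
  linarith

set_option maxHeartbeats 1000000 in
lemma core_ineq (πhi a Fs Fp Gs Gp ps p q : ℝ)
    (hπ : 0 < πhi) (ha : 0 < a) (ha2 : 2*a < 1)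
    (hFs : 0 < Fs) (hFs1 : Fs ≤ 1) (hFp : 0 < Fp) (hFp1 : Fp ≤ 1)
    (hps0 : 0 ≤ ps) (hpsπ : ps ≤ πhi) (hp0 : 0 ≤ p) (hpπ : p ≤ πhi)
    (hGs0 : 0 ≤ Gs) (hGp0 : 0 ≤ Gp)
    (hG2s : 2*Gs ≤ ps*Fs) (hG2p : 2*Gp ≤ p*Fp)
    (hpsc : ps ≤ πhi*Fs)
    (hq0 : 0 ≤ q) (hq1 : q ≤ 1)
    (hup : ps ≤ p → Fs ≤ Fp ∧ ps*(Fp-Fs) ≤ Gp-Gs)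
    (hdown : p ≤ ps → Fp ≤ Fs ∧ Gs-Gp ≤ ps*(Fs-Fp))
    (h9 : (1-q)*(Fs*(1-a*(1-Fs))) ≤ Fp*(1-a*(1-Fp))) :
    Gs/(Fs*(1-a*(1-Fs))) ≤ q*πhi + (1-q)*(Gp/(Fp*(1-a*(1-Fp)))) := by
  have hDs : 1/2 < 1 - a*(1-Fs) := by nlinarith [mul_nonneg ha.le hFs.le]
  have hDp : 1/2 < 1 - a*(1-Fp) := by nlinarith [mul_nonneg ha.le hFp.le]
  have hψs : 0 < Fs*(1-a*(1-Fs)) := mul_pos hFs (by linarith)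
  have hψp : 0 < Fp*(1-a*(1-Fp)) := mul_pos hFp (by linarith)
  have hXπ : Gp/(Fp*(1-a*(1-Fp))) ≤ πhi := by
    rw [div_le_iff₀ hψp]
    have e1 : 2*Gp ≤ πhi*Fp := le_trans hG2p (mul_le_mul_of_nonneg_right hpπ hFp.le)
    nlinarith [mul_nonneg (mul_nonneg hπ.le hFp.le)
      (by linarith : (0:ℝ) ≤ 2*(1-a*(1-Fp)) - 1)]
  have hTπ : Gs/(Fs*(1-a*(1-Fs))) ≤ πhi := by
    rw [div_le_iff₀ hψs]
    have e1 : 2*Gs ≤ πhi*Fs := le_trans hG2s (mul_le_mul_of_nonneg_right hpsπ hFs.le)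
    nlinarith [mul_nonneg (mul_nonneg hπ.le hFs.le)
      (by linarith : (0:ℝ) ≤ 2*(1-a*(1-Fs)) - 1)]
  rcases le_total ps p with hcase | hcase
  · obtain ⟨hFsp, hGdiff⟩ := hup hcase
    have hK : 0 < 1 - a + a*(Fp+Fs) := by
      nlinarith [mul_nonneg ha.le (by linarith : (0:ℝ) ≤ Fp+Fs)]
    have h1a : 0 ≤ 1 - a + a*Fs - a*Fp := by
      nlinarith [mul_nonneg ha.le hFs.le, mul_le_of_le_one_right ha.le hFp1]
    have hB : Gs*(1 - a + a*(Fp+Fs)) ≤ ps*(Fs*(1-a*(1-Fs))) := by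
      nlinarith [mul_le_mul_of_nonneg_right hG2s hK.le,
        mul_nonneg (mul_nonneg hps0 hFs.le) h1a]
    have hTX : Gs/(Fs*(1-a*(1-Fs))) ≤ Gp/(Fp*(1-a*(1-Fp))) := by
      rw [div_le_div_iff₀ hψs hψp]
      nlinarith [mul_le_mul_of_nonneg_right hGdiff hψs.le,
        mul_le_mul_of_nonneg_left hB (sub_nonneg.2 hFsp)]
    nlinarith [mul_nonneg hq0 (sub_nonneg.2 hTπ),
      mul_nonneg (by linarith : (0:ℝ) ≤ 1-q) (sub_nonneg.2 hTX)]
  · obtain ⟨hFps, hGdiff⟩ := hdown hcase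
    have h5 : Gs - Gp ≤ πhi*((Fs*(1-a*(1-Fs))) - (Fp*(1-a*(1-Fp)))) := by
      have hKFs : Fs ≤ 1 - a + a*(Fs+Fp) := by nlinarith [mul_nonneg ha.le hFp.le]
      calc Gs - Gp ≤ ps*(Fs-Fp) := hGdiff
        _ ≤ (πhi*Fs)*(Fs-Fp) := mul_le_mul_of_nonneg_right hpsc (by linarith)
        _ ≤ (πhi*(1-a+a*(Fs+Fp)))*(Fs-Fp) :=
            mul_le_mul_of_nonneg_right (mul_le_mul_of_nonneg_left hKFs hπ.le) (by linarith)
        _ = πhi*((Fs*(1-a*(1-Fs))) - (Fp*(1-a*(1-Fp)))) := by ring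
    have hX : Gp = (Gp/(Fp*(1-a*(1-Fp)))) * (Fp*(1-a*(1-Fp))) :=
      (div_mul_cancel₀ Gp hψp.ne').symm
    rw [div_le_iff₀ hψs]
    nlinarith [mul_nonneg (sub_nonneg.2 hXπ) (sub_nonneg.2 h9), h5, hX]

/-- Expected total cost for a persistent request (with `π̲ = 0`). -/
noncomputable def Phi3 (πhi tk te tr : ℝ) (f F : ℝ → ℝ) (p q : ℝ) : ℝ :=
  q * te * πhi +
    ((1 - q) * te / (1 - (tr / tk) * (1 - F p))) * ((∫ x in (0:ℝ)..p, x * f x) / F p)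

/-- Feasibility for problem (P3) (with `π̲ = 0`). -/
def P3Feasible (πhi tk te ts tr : ℝ) (F : ℝ → ℝ) (p q : ℝ) : Prop :=
  0 ≤ p ∧ p ≤ πhi ∧ 0 ≤ q ∧ q ≤ 1 ∧ q * te ≤ ts ∧ 0 < F p ∧
  2 * tr * (1 - F p) < tk ∧
  (1 - q) * te ≤ ts * F p * (1 - (tr / tk) * (1 - F p))

set_option maxHeartbeats 1000000 in
/-- (Proposition 4.) If `π̲ = 0`, `t_s > t_e` and `0 < 2 t_r < t_k`, and
`p* ∈ [0, π̄]` satisfies `ψ₃(p*) = F(p*)(1 − (t_r/t_k)(1 − F(p*))) = t_e/t_s`,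
then `(p*, 0)` is P3-feasible and optimal for (P3). -/
theorem stmt_16
    (πhi : ℝ) (f F : ℝ → ℝ)
    (hπhi : 0 < πhi)
    (hcont : ContinuousOn f (Set.Icc 0 πhi))
    (hnn : ∀ x ∈ Set.Icc 0 πhi, 0 ≤ f x)
    (hanti : ∀ x ∈ Set.Icc 0 πhi, ∀ y ∈ Set.Icc 0 πhi, x ≤ y → f y ≤ f x)
    (hone : (∫ x in (0:ℝ)..πhi, f x) = 1)
    (hF : ∀ p, F p = ∫ x in (0:ℝ)..p, f x)
    (tk te ts tr : ℝ) (htk : 0 < tk) (hte : 0 < te) (hts : 0 < ts)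
    (h1 : te < ts) (h3 : 0 < tr) (h4 : 2 * tr < tk)
    (ψ₃ : ℝ → ℝ)
    (hψ₃ : ∀ p, ψ₃ p = F p * (1 - (tr / tk) * (1 - F p)))
    (pstar : ℝ) (hpstar : pstar ∈ Set.Icc 0 πhi)
    (hroot : ψ₃ pstar = te / ts) :
    P3Feasible πhi tk te ts tr F pstar 0 ∧
    ∀ p q, P3Feasible πhi tk te ts tr F p q →
      Phi3 πhi tk te tr f F pstar 0 ≤ Phi3 πhi tk te tr f F p q := by
  have ha : 0 < tr / tk := div_pos h3 htk
  have ha2 : 2 * (tr / tk) < 1 := by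
    have : tr / tk < 1/2 := by rw [div_lt_div_iff₀ htk (by norm_num)]; linarith
    linarith
  -- basic integral facts
  have hsub : ∀ {x y : ℝ}, 0 ≤ x → x ≤ y → y ≤ πhi → Set.uIcc x y ⊆ Set.Icc 0 πhi := by
    intro x y hx hxy hy
    rw [Set.uIcc_of_le hxy]
    exact Set.Icc_subset_Icc hx hy
  have hif : ∀ {x y : ℝ}, 0 ≤ x → x ≤ y → y ≤ πhi →
      IntervalIntegrable f MeasureTheory.volume x y := fun hx hxy hy =>
    ((hcont.mono (hsub hx hxy hy))).intervalIntegrable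
  have hig : ∀ {x y : ℝ}, 0 ≤ x → x ≤ y → y ≤ πhi →
      IntervalIntegrable (fun x : ℝ => x * f x) MeasureTheory.volume x y := fun hx hxy hy =>
    ((continuousOn_id.mul hcont).mono (hsub hx hxy hy)).intervalIntegrable
  have hFd : ∀ x y : ℝ, 0 ≤ x → x ≤ y → y ≤ πhi →
      F y - F x = ∫ t in x..y, f t := by
    intro x y hx hxy hy
    rw [hF, hF]
    rw [← intervalIntegral.integral_add_adjacent_intervals (hif le_rfl hx (by linarith))
      (hif hx hxy hy)]
    ring
  have hFmono : ∀ x y : ℝ, 0 ≤ x → x ≤ y → y ≤ πhi → F x ≤ F y := by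
    intro x y hx hxy hy
    have h := hFd x y hx hxy hy
    have : 0 ≤ ∫ t in x..y, f t :=
      intervalIntegral.integral_nonneg hxy (fun u hu => hnn u ⟨le_trans hx hu.1, le_trans hu.2 hy⟩)
    linarith
  have hF0 : F 0 = 0 := by rw [hF]; simp
  have hFnn : ∀ p ∈ Set.Icc (0:ℝ) πhi, 0 ≤ F p := fun p hp => hF0 ▸ hFmono 0 p le_rfl hp.1 hp.2
  have hFone : F πhi = 1 := by rw [hF]; exact hone
  have hFle1 : ∀ p ∈ Set.Icc (0:ℝ) πhi, F p ≤ 1 := fun p hp =>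
    hFone ▸ hFmono p πhi hp.1 hp.2 le_rfl
  have hGnn : ∀ p ∈ Set.Icc (0:ℝ) πhi, 0 ≤ ∫ x in (0:ℝ)..p, x * f x := fun p hp =>
    intervalIntegral.integral_nonneg hp.1
      (fun u hu => mul_nonneg hu.1 (hnn u ⟨hu.1, le_trans hu.2 hp.2⟩))
  have hGd : ∀ u v : ℝ, 0 ≤ u → u ≤ v → v ≤ πhi →
      (∫ x in (0:ℝ)..v, x * f x) - (∫ x in (0:ℝ)..u, x * f x) = ∫ x in u..v, x * f x := by
    intro u v hu huv hv
    rw [← intervalIntegral.integral_add_adjacent_intervals (hig le_rfl hu (by linarith))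
      (hig hu huv hv)]
    ring
  have hGlow : ∀ u v : ℝ, 0 ≤ u → u ≤ v → v ≤ πhi →
      u * (F v - F u) ≤ (∫ x in (0:ℝ)..v, x * f x) - ∫ x in (0:ℝ)..u, x * f x := by
    intro u v hu huv hv
    rw [hGd u v hu huv hv, hFd u v hu huv hv, ← intervalIntegral.integral_const_mul]
    apply intervalIntegral.integral_mono_on huv ((hif hu huv hv).const_mul u) (hig hu huv hv)
    intro x hx
    exact mul_le_mul_of_nonneg_right hx.1 (hnn x ⟨le_trans hu hx.1, le_trans hx.2 hv⟩)
  have hGhigh : ∀ u v : ℝ, 0 ≤ u → u ≤ v → v ≤ πhi →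
      (∫ x in (0:ℝ)..v, x * f x) - (∫ x in (0:ℝ)..u, x * f x) ≤ v * (F v - F u) := by
    intro u v hu huv hv
    rw [hGd u v hu huv hv, hFd u v hu huv hv, ← intervalIntegral.integral_const_mul]
    apply intervalIntegral.integral_mono_on huv (hig hu huv hv) ((hif hu huv hv).const_mul v)
    intro x hx
    exact mul_le_mul_of_nonneg_right hx.2 (hnn x ⟨le_trans hu hx.1, le_trans hx.2 hv⟩)
  have hconc : ∀ p ∈ Set.Icc (0:ℝ) πhi, p ≤ πhi * F p := by
    intro p hp
    have hA : p * f p ≤ F p := by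
      rw [hF]
      have : ∫ x in (0:ℝ)..p, f p ≤ ∫ x in (0:ℝ)..p, f x := by
        apply intervalIntegral.integral_mono_on hp.1 intervalIntegrable_const (hif le_rfl hp.1 hp.2)
        intro x hx
        exact hanti x ⟨hx.1, le_trans hx.2 hp.2⟩ p hp hx.2
      simpa using this
    have hB : 1 - F p ≤ (πhi - p) * f p := by
      have h := hFd p πhi hp.1 hp.2 le_rfl
      rw [hFone] at h
      have : ∫ x in p..πhi, f x ≤ ∫ x in p..πhi, f p := by
        apply intervalIntegral.integral_mono_on hp.2 (hif hp.1 hp.2 le_rfl) intervalIntegrable_const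
        intro x hx
        exact hanti p hp x ⟨le_trans hp.1 hx.1, hx.2⟩ hx.1
      simp at this
      linarith
    have hfp : 0 ≤ f p := hnn p hp
    nlinarith [mul_le_mul_of_nonneg_left hB hp.1, mul_le_mul_of_nonneg_left hA (sub_nonneg.2 hp.2)]
  have hG2 : ∀ p ∈ Set.Icc (0:ℝ) πhi, 2 * (∫ x in (0:ℝ)..p, x * f x) ≤ p * F p := by
    intro p hp
    rw [hF]
    exact mean_le_half f p hp.1 (hcont.mono (Set.Icc_subset_Icc le_rfl hp.2))
      (fun x hx y hy hxy => hanti x ⟨hx.1, le_trans hx.2 hp.2⟩ y ⟨hy.1, le_trans hy.2 hp.2⟩ hxy)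
  -- star quantities
  have hψs_eq : F pstar * (1 - tr / tk * (1 - F pstar)) = te / ts := by rw [← hψ₃]; exact hroot
  have hψs_pos : 0 < F pstar * (1 - tr / tk * (1 - F pstar)) := by
    rw [hψs_eq]; exact div_pos hte hts
  have hFs_pos : 0 < F pstar := by
    rcases (hFnn pstar hpstar).lt_or_eq with h | h
    · exact h
    · rw [← h] at hψs_pos; simp at hψs_pos
  have hFs1 : F pstar ≤ 1 := hFle1 pstar hpstar
  have htse : ts * (F pstar * (1 - tr / tk * (1 - F pstar))) = te := by
    rw [hψs_eq]; field_simp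
  have hfeas_star : P3Feasible πhi tk te ts tr F pstar 0 := by
    refine ⟨hpstar.1, hpstar.2, le_rfl, zero_le_one, by simpa using hts.le, hFs_pos, ?_, ?_⟩
    · nlinarith [hFs_pos]
    · rw [mul_assoc, htse]; linarith
  refine ⟨hfeas_star, ?_⟩
  rintro p q ⟨hp0, hpπ, hq0, hq1, -, hFp_pos, hrec, hconstr⟩
  have hpIcc : p ∈ Set.Icc (0:ℝ) πhi := ⟨hp0, hpπ⟩
  have hFp1 : F p ≤ 1 := hFle1 p hpIcc
  have hDp_pos : 0 < 1 - tr / tk * (1 - F p) := by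
    have : tr / tk * (1 - F p) < 1/2 := by
      rw [div_mul_eq_mul_div, div_lt_div_iff₀ htk (by norm_num)]
      linarith
    linarith
  have hDs_pos : 0 < 1 - tr / tk * (1 - F pstar) := by
    have : tr / tk * (1 - F pstar) ≤ tr / tk := by
      nlinarith [mul_nonneg ha.le hFs_pos.le]
    linarith
  -- rewrite Phi3
  have ePhi : ∀ p' q' : ℝ, F p' ≠ 0 → (1 - tr / tk * (1 - F p')) ≠ 0 →
      Phi3 πhi tk te tr f F p' q'
        = te * (q' * πhi + (1 - q') *
            ((∫ x in (0:ℝ)..p', x * f x) / (F p' * (1 - tr / tk * (1 - F p'))))) := by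
    intro p' q' hn1 hn2
    unfold Phi3
    field_simp
  rw [ePhi pstar 0 hFs_pos.ne' hDs_pos.ne', ePhi p q hFp_pos.ne' hDp_pos.ne']
  -- the feasibility constraint gives (1-q) ψ(p*) ≤ ψ(p)
  have h9 : (1 - q) * (F pstar * (1 - tr / tk * (1 - F pstar)))
      ≤ F p * (1 - tr / tk * (1 - F p)) := by
    have h9' : ts * ((1 - q) * (F pstar * (1 - tr / tk * (1 - F pstar))))
        ≤ ts * (F p * (1 - tr / tk * (1 - F p))) := by
      calc ts * ((1 - q) * (F pstar * (1 - tr / tk * (1 - F pstar))))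
          = (1 - q) * (ts * (F pstar * (1 - tr / tk * (1 - F pstar)))) := by ring
        _ = (1 - q) * te := by rw [htse]
        _ ≤ ts * F p * (1 - tr / tk * (1 - F p)) := hconstr
        _ = ts * (F p * (1 - tr / tk * (1 - F p))) := by ring
    exact le_of_mul_le_mul_left h9' hts
  have key := core_ineq πhi (tr / tk) (F pstar) (F p)
    (∫ x in (0:ℝ)..pstar, x * f x) (∫ x in (0:ℝ)..p, x * f x) pstar p q
    hπhi ha ha2 hFs_pos hFs1 hFp_pos hFp1 hpstar.1 hpstar.2 hp0 hpπ
    (hGnn pstar hpstar) (hGnn p hpIcc) (hG2 pstar hpstar) (hG2 p hpIcc)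
    (hconc pstar hpstar) hq0 hq1
    (fun hc => ⟨hFmono pstar p hpstar.1 hc hpπ, hGlow pstar p hpstar.1 hc hpπ⟩)
    (fun hc => ⟨hFmono p pstar hp0 hc hpstar.2, hGhigh p pstar hp0 hc hpstar.2⟩)
    h9
  nlinarith [mul_le_mul_of_nonneg_left key hte.le]
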